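/- The characteristic function of −V, where V = (2-p)IJ − p·max(I,J) for independent Bernoulli(p) variables I, J, is f(t) = p²e^{−2it(1−p)} + 2p(1−p)e^{itp} + (1−p)². Moreover, if n(1−p_n) → c > 0, then n(f_n(t) − 1) → 2c(e^{it} − it − 1) for every real t, where f_n is this function with p = p_n. -/

import Mathlib

open MeasureTheory ProbabilityTheory Filter
open scoped ENNReal

/-- Two independent Bernoulli(p) random variables `(I, J)`, as a product measure on
`Bool × Bool`. -/
noncomputable def bernPair (p : ℝ≥0∞) (hp : p ≤ 1) : Measure (Bool × Bool) :=
  ((PMF.ofFintype (fun b => cond b p (1 - p)) (by simp [add_tsub_cancel_of_le hp])).toMeasure).prod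
    ((PMF.ofFintype (fun b => cond b p (1 - p)) (by simp [add_tsub_cancel_of_le hp])).toMeasure)

/-- The real-valued indicator of a Boolean. -/
def bInd (b : Bool) : ℝ := if b then 1 else 0

/-- `V = (2-p) I J − p max(I, J)`. -/
noncomputable def Vb (p : ℝ) (ω : Bool × Bool) : ℝ :=
  (2 - p) * bInd ω.1 * bInd ω.2 - p * max (bInd ω.1) (bInd ω.2)

/-- The claimed characteristic function of `−V`:
`f(t) = p² e^{−2it(1−p)} + 2p(1−p) e^{itp} + (1−p)²`. -/
noncomputable def charFun (p : ℝ) (t : ℝ) : ℂ :=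
  (p : ℂ) ^ 2 * Complex.exp (-2 * Complex.I * t * (1 - (p : ℂ))) +
    2 * p * (1 - (p : ℂ)) * Complex.exp (Complex.I * t * (p : ℂ)) + (1 - (p : ℂ)) ^ 2

/-!
For the limit put `q = 1 - p`: then `f(t) - 1 = F(q)` for a function `F` differentiable at `0`
with `F 0 = 0` and `F' 0 = 2(e^{it} - it - 1)`. Since `n qₙ → c` forces `qₙ → 0`,
`n F(qₙ) = (n qₙ) • dslope F 0 qₙ → c F'(0)`; the identity also holds when `qₙ = 0`.
-/
theorem tendsto_zero_of_tendsto_nat_mul {q : ℕ → ℝ} {c : ℝ}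
    (hq : Tendsto (fun n : ℕ => (n : ℝ) * q n) atTop (nhds c)) :
    Tendsto q atTop (nhds 0) := by
  have h := hq.mul (tendsto_inv_atTop_zero.comp tendsto_natCast_atTop_atTop)
  rw [mul_zero] at h
  refine h.congr' ?_
  filter_upwards [eventually_ne_atTop 0] with n hn
  simp only [Function.comp_apply]
  field_simp

theorem tendsto_nat_smul_of_hasDerivAt {E : Type*} [NormedAddCommGroup E] [NormedSpace ℝ E]
    {h : ℝ → E} {h' : E} (hh : HasDerivAt h h' 0) (h0 : h 0 = 0) {q : ℕ → ℝ} {c : ℝ}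
    (hq : Tendsto (fun n : ℕ => (n : ℝ) * q n) atTop (nhds c)) :
    Tendsto (fun n : ℕ => (n : ℝ) • h (q n)) atTop (nhds (c • h')) := by
  have hslope : Tendsto (fun n => dslope h 0 (q n)) atTop (nhds h') := by
    have := (continuousAt_dslope_same.mpr hh.differentiableAt).tendsto.comp
      (tendsto_zero_of_tendsto_nat_mul hq)
    rwa [dslope_same, hh.deriv] at this
  refine (hq.smul hslope).congr fun n => ?_
  have hdiff := sub_smul_dslope h 0 (q n)
  rw [sub_zero, h0, sub_zero] at hdiff
  rw [mul_smul, hdiff]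

theorem integral_bernPair {E : Type*} [NormedAddCommGroup E] [NormedSpace ℝ E] [CompleteSpace E]
    {p : ℝ} (hp0 : 0 ≤ p) (hp1 : ENNReal.ofReal p ≤ 1) (f : Bool × Bool → E) :
    ∫ ω, f ω ∂bernPair (ENNReal.ofReal p) hp1 =
      (p * p) • f (true, true) + (p * (1 - p)) • f (true, false) +
        ((1 - p) * p) • f (false, true) + ((1 - p) * (1 - p)) • f (false, false) := by
  have hp1' : p ≤ 1 := ENNReal.ofReal_le_one.mp hp1
  have hsingle : ∀ a b : Bool, (bernPair (ENNReal.ofReal p) hp1).real {(a, b)} =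
      cond a p (1 - p) * cond b p (1 - p) := by
    intro a b
    rw [Measure.real, ← Set.singleton_prod_singleton, bernPair, Measure.prod_prod,
      PMF.toMeasure_apply_singleton _ _ (measurableSet_singleton _),
      PMF.toMeasure_apply_singleton _ _ (measurableSet_singleton _)]
    cases a <;> cases b <;>
      simp [PMF.ofFintype_apply, ← ENNReal.ofReal_one, ← ENNReal.ofReal_sub _ hp0, hp0, hp1']
  have : IsProbabilityMeasure (bernPair (ENNReal.ofReal p) hp1) := by
    unfold bernPair; infer_instance
  rw [integral_fintype .of_finite, Fintype.sum_prod_type]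
  simp only [Fintype.sum_bool, hsingle, cond_true, cond_false]
  abel

theorem integral_bernPair_exp_neg_Vb (p : ℝ) (hp0 : 0 ≤ p) (hp1 : ENNReal.ofReal p ≤ 1) (t : ℝ) :
    ∫ ω, Complex.exp (-(Complex.I * t * (Vb p ω))) ∂bernPair (ENNReal.ofReal p) hp1
      = charFun p t := by
  rw [integral_bernPair hp0]
  simp only [Vb, bInd, if_true, if_false, Bool.false_eq_true, max_self, Complex.real_smul]
  norm_num [_root_.charFun]
  ring_nf

open Complex in
theorem hasDerivAt_charFun_one_sub (t : ℝ) :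
    HasDerivAt (fun q : ℝ => _root_.charFun (1 - q) t - 1) (2 * (exp (I * t) - I * t - 1)) 0 := by
  have hid := hasDerivAt_id ((0 : ℝ) : ℂ)
  -- `f(t) - 1` at `p = 1 - z` is `(1 - z)² e^{-2itz} + 2(1 - z) z e^{it(1 - z)} + z² - 1`
  have hG := (((((hid.const_sub 1).pow 2).mul ((hid.const_mul (-2 * I * t)).cexp)).add
    ((((hid.const_sub 1).const_mul 2).mul hid).mul ((hid.const_sub 1).const_mul (I * t)).cexp)).add
    (hid.pow 2)).sub_const 1
  convert hG.comp_ofReal using 1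
  · ext q
    simp only [_root_.charFun, Pi.add_apply, Pi.mul_apply, Pi.pow_apply, id]
    push_cast
    ring_nf
  · simp
    ring

theorem charFun_negV_general (p : ℝ) (hp : p ∈ Set.Icc (0 : ℝ) 1)
    (pseq : ℕ → ℝ)
    (c : ℝ)
    (hlim : Tendsto (fun n : ℕ => (n : ℝ) * (1 - pseq n)) atTop (nhds c)) :
    (∀ t : ℝ,
      ∫ ω, Complex.exp (-(Complex.I * t * (Vb p ω)))
          ∂(bernPair (ENNReal.ofReal p) (ENNReal.ofReal_le_one.mpr hp.2))
        = charFun p t) ∧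
    (∀ t : ℝ,
      Tendsto (fun n : ℕ => (n : ℂ) * (charFun (pseq n) t - 1)) atTop
        (nhds (2 * c * (Complex.exp (Complex.I * t) - Complex.I * t - 1)))) := by
  refine ⟨integral_bernPair_exp_neg_Vb p hp.1 _, fun t => ?_⟩
  have hF0 : _root_.charFun (1 - 0) t - 1 = 0 := by simp [_root_.charFun]
  convert tendsto_nat_smul_of_hasDerivAt (hasDerivAt_charFun_one_sub t) hF0 hlim using 2 with n
  · simp [Complex.real_smul]
  · rw [Complex.real_smul]
    ring

/-- The characteristic function of `−V` is `f(t) = p² e^{−2it(1−p)} + 2p(1−p) e^{itp}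
+ (1−p)²`; moreover, if `n(1−p_n) → c > 0` then `n(f_n(t) − 1) → 2c(e^{it} − it − 1)`
for every real `t`. -/
theorem charFun_negV (p : ℝ) (hp : p ∈ Set.Icc (0 : ℝ) 1)
    (pseq : ℕ → ℝ) (hpseq : ∀ n, pseq n ∈ Set.Icc (0 : ℝ) 1)
    (c : ℝ) (hc : 0 < c)
    (hlim : Tendsto (fun n : ℕ => (n : ℝ) * (1 - pseq n)) atTop (nhds c)) :
    (∀ t : ℝ,
      ∫ ω, Complex.exp (-(Complex.I * t * (Vb p ω)))
          ∂(bernPair (ENNReal.ofReal p) (ENNReal.ofReal_le_one.mpr hp.2))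
        = charFun p t) ∧
    (∀ t : ℝ,
      Tendsto (fun n : ℕ => (n : ℂ) * (charFun (pseq n) t - 1)) atTop
        (nhds (2 * c * (Complex.exp (Complex.I * t) - Complex.I * t - 1)))) :=
  charFun_negV_general p hp pseq c hlim
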